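/- arXiv:1202.4153 — 3 statements merged into one kernel-verified Lean document; each statement's English description precedes it below -/
import Mathlib

section
/- The hyperreal field is real closed: in the linearly ordered field ℝ*, every nonnegative element is a square, and every polynomial over ℝ* of odd degree has a root in ℝ*. -/
/-!
Over `ℝ`, square roots exist and a monic polynomial of odd degree changes sign, so has a root
by the intermediate value theorem. The property "every monic polynomial of degree `n` has a root"
passes to products of rings (solve coordinatewise: a monic polynomial keeps its degree under each
projection) and to quotients by surjective ring maps (a monic polynomial lifts to a monic one of
the same degree), hence to the ultrapower `ℝ*`. Dividing by the leading coefficient reduces odd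
degree polynomials over the field `ℝ*` to monic ones.
-/

open Polynomial Filter

namespace Polynomial

theorem Monic.tendsto_atBot_of_odd_natDegree {P : ℝ[X]} (hP : P.Monic)
    (hodd : Odd P.natDegree) : Tendsto (fun x => P.eval x) atBot atBot := by
  have hlead :
      (fun x : ℝ => P.leadingCoeff * x ^ P.natDegree) = fun x => -(-x) ^ P.natDegree := by
    ext x; rw [hP.leadingCoeff, one_mul, hodd.neg_pow, neg_neg]
  refine P.isEquivalent_atBot_lead.symm.tendsto_atBot ?_
  rw [hlead]
  exact tendsto_neg_atTop_atBot.comp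
    ((tendsto_pow_atTop hodd.pos.ne').comp tendsto_neg_atBot_atTop)

theorem Monic.exists_isRoot_of_odd_natDegree {P : ℝ[X]} (hP : P.Monic)
    (hodd : Odd P.natDegree) : ∃ x, P.IsRoot x :=
  P.continuous.surjective
    (P.tendsto_atTop_of_leadingCoeff_nonneg (natDegree_pos_iff_degree_pos.mp hodd.pos)
      (hP.leadingCoeff ▸ zero_le_one))
    (hP.tendsto_atBot_of_odd_natDegree hodd) 0

theorem exists_isRoot_of_monic_pi {ι : Type*} {R : ι → Type*} [∀ i, CommRing (R i)]
    [∀ i, Nontrivial (R i)] {n : ℕ}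
    (h : ∀ i (q : (R i)[X]), q.Monic → q.natDegree = n → ∃ x, q.IsRoot x)
    {P : (Π i, R i)[X]} (hP : P.Monic) (hn : P.natDegree = n) : ∃ x, P.IsRoot x := by
  choose x hx using fun i => h i (P.map (Pi.evalRingHom R i)) (hP.map _)
    (by rw [hP.natDegree_map, hn])
  refine ⟨x, IsRoot.def.mpr ?_⟩
  ext i
  exact (eval_map_apply (Pi.evalRingHom R i) x).symm.trans (hx i).eq_zero

theorem exists_isRoot_of_monic_of_surjective {R S : Type*} [CommRing R] [CommRing S]
    {f : R →+* S} (hf : Function.Surjective f) {n : ℕ}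
    (h : ∀ q : R[X], q.Monic → q.natDegree = n → ∃ x, q.IsRoot x)
    {p : S[X]} (hp : p.Monic) (hn : p.natDegree = n) : ∃ x, p.IsRoot x := by
  obtain ⟨q, rfl, hqn, hq⟩ := lifts_and_natDegree_eq_and_monic (map_surjective f hf p) hp
  obtain ⟨x, hx⟩ := h q hq (hqn.trans hn)
  exact ⟨f x, by simp [hx.eq_zero]⟩

theorem exists_isRoot_of_odd_natDegree_of_monic {K : Type*} [Field K]
    (h : ∀ q : K[X], q.Monic → Odd q.natDegree → ∃ x, q.IsRoot x)
    {p : K[X]} (hp : Odd p.natDegree) : ∃ x, p.IsRoot x := by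
  have hp0 : p ≠ 0 := by rintro rfl; simp at hp
  obtain ⟨x, hx⟩ := h _ (monic_mul_leadingCoeff_inv hp0)
    (by rwa [natDegree_mul_leadingCoeff_inv _ hp0])
  exact ⟨x, by simpa [hp0] using hx⟩

end Polynomial

namespace Filter.Germ

variable {α : Type*} {l : Filter α}

theorem exists_isRoot_of_monic {R : Type*} [CommRing R] [Nontrivial R] {n : ℕ}
    (h : ∀ q : R[X], q.Monic → q.natDegree = n → ∃ x, q.IsRoot x)
    {p : (Germ l R)[X]} (hp : p.Monic) (hn : p.natDegree = n) : ∃ x, p.IsRoot x :=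
  exists_isRoot_of_monic_of_surjective (f := coeRingHom l) Quot.mk_surjective
    (fun _ hP hPn => exists_isRoot_of_monic_pi (fun _ => h) hP hPn) hp hn

theorem exists_sq_eq_of_nonneg {x : Germ l ℝ} (hx : 0 ≤ x) : ∃ y, y ^ 2 = x := by
  induction x using Germ.inductionOn with | h f => ?_
  refine ⟨(fun a => √(f a) : α → ℝ), Germ.coe_eq.mpr ?_⟩
  filter_upwards [Germ.coe_nonneg.mp hx] with a ha using Real.sq_sqrt ha

end Filter.Germ

open Hyperreal in
/-- The hyperreal field is real closed: every nonnegative hyperreal is a square, and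
every polynomial over `ℝ*` of odd degree has a root in `ℝ*`. -/
theorem hyperreal_realClosed :
    (∀ x : ℝ*, 0 ≤ x → ∃ y : ℝ*, y ^ 2 = x) ∧
      (∀ p : Polynomial ℝ*, Odd p.natDegree → ∃ x : ℝ*, p.eval x = 0) := by
  refine ⟨fun x hx => Germ.exists_sq_eq_of_nonneg hx, fun p hp => ?_⟩
  refine exists_isRoot_of_odd_natDegree_of_monic (fun q hq hodd => ?_) hp
  exact Germ.exists_isRoot_of_monic
    (fun r hr hrn => hr.exists_isRoot_of_odd_natDegree (hrn ▸ hodd)) hq rfl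
end

section
/- If a real sequence r : ℕ → ℝ is Cauchy, then the hyperreal ofSeq r is limited and its standard part equals the limit of the sequence: st(ofSeq r) = lim_{n→∞} r_n. -/
open Hyperreal Filter

/-- If a real sequence `r` is Cauchy, then the hyperreal `ofSeq r` is limited and its
standard part is the limit of the sequence. -/
theorem st_ofSeq_eq_lim_of_cauchySeq (r : ℕ → ℝ) (hr : CauchySeq r) :
    (∃ c : ℝ, |ofSeq r| < (c : ℝ*)) ∧ Tendsto r atTop (nhds (st (ofSeq r))) := by
  obtain ⟨L, hL⟩ := cauchySeq_tendsto_of_complete hr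
  have hst : IsSt (ofSeq r) L := isSt_of_tendsto hL
  have hstL : st (ofSeq r) = L := hst.st_eq
  refine ⟨⟨|L| + 1, ?_⟩, hstL ▸ hL⟩
  have h1 : ofSeq r < L + 1 := (hst 1 one_pos).2
  have h2 : (L : ℝ*) - 1 < ofSeq r := (hst 1 one_pos).1
  push_cast
  rw [abs_lt]
  constructor
  · calc -(|(L:ℝ*)| + 1) ≤ L - 1 := by
          have : -|(L:ℝ*)| ≤ L := neg_abs_le _
          linarith
       _ < ofSeq r := h2
  · calc ofSeq r < L + 1 := h1
       _ ≤ |(L:ℝ*)| + 1 := by have := le_abs_self ((L:ℝ*)); linarith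
end

section
/- Microcontinuity at all hyperreal points characterizes uniform continuity: a function f : ℝ → ℝ is uniformly continuous on ℝ if and only if its natural extension f* is microcontinuous at every point of ℝ*, i.e. for all hyperreals x, y with x ≈ y one has f*(x) ≈ f*(y). -/
open Hyperreal Filter

/-- The natural extension of `f : ℝ → ℝ` to the hyperreals: the germ map, which
satisfies `naturalExtension f (ofSeq r) = ofSeq (f ∘ r)`. -/
noncomputable def naturalExtension (f : ℝ → ℝ) : ℝ* → ℝ* := Germ.map f

lemma infinitesimal_ofSeq_iff {c : ℕ → ℝ} :
    Infinitesimal (ofSeq c) ↔ Tendsto c (hyperfilter ℕ) (nhds 0) :=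
  isSt_ofSeq_iff_tendsto

/-- Microcontinuity at every hyperreal point characterizes uniform continuity:
`f : ℝ → ℝ` is uniformly continuous on `ℝ` iff its natural extension `f*` satisfies
`f*(x) ≈ f*(y)` for all hyperreals `x ≈ y`. -/
theorem uniformContinuous_iff_microcontinuous (f : ℝ → ℝ) :
    UniformContinuous f ↔
      ∀ x y : ℝ*, Infinitesimal (x - y) →
        Infinitesimal (naturalExtension f x - naturalExtension f y) := by
  constructor
  · intro hf x y hxy
    rcases ofSeq_surjective x with ⟨a, rfl⟩
    rcases ofSeq_surjective y with ⟨b, rfl⟩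
    have hsub : ofSeq a - ofSeq b = ofSeq (fun n => a n - b n) := rfl
    have hsub2 : naturalExtension f (ofSeq a) - naturalExtension f (ofSeq b)
        = ofSeq (fun n => f (a n) - f (b n)) := rfl
    rw [hsub, infinitesimal_ofSeq_iff] at hxy
    rw [hsub2, infinitesimal_ofSeq_iff]
    rw [Metric.tendsto_nhds]
    intro eps heps
    rcases Metric.uniformContinuous_iff.1 hf eps heps with ⟨d, hd, H⟩
    filter_upwards [Metric.tendsto_nhds.1 hxy d hd] with n hn
    have : dist (a n) (b n) < d := by
      simpa [Real.dist_eq] using hn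
    simpa [Real.dist_eq] using H this
  · intro h
    rw [Metric.uniformContinuous_iff]
    by_contra hc
    push_neg at hc
    obtain ⟨eps, heps, H⟩ := hc
    choose a b hab hf using fun n : ℕ => H (1 / (n + 1)) (by positivity)
    have hinf : Infinitesimal (ofSeq a - ofSeq b) := by
      have heq0 : (ofSeq a - ofSeq b) = ofSeq (fun n => a n - b n) := rfl
      rw [heq0, infinitesimal_ofSeq_iff, Metric.tendsto_nhds]
      intro r hr
      have h1 : Tendsto (fun n : ℕ => 1 / ((n : ℝ) + 1)) atTop (nhds 0) :=
        tendsto_one_div_add_atTop_nhds_zero_nat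
      have h2 : ∀ᶠ n : ℕ in atTop, (1 : ℝ) / (n + 1) < r := h1.eventually (gt_mem_nhds hr)
      apply Filter.Eventually.filter_mono Nat.hyperfilter_le_atTop
      filter_upwards [h2] with n hn
      have := (hab n).trans hn
      simpa [Real.dist_eq] using this
    have hmc := h _ _ hinf
    have heq : naturalExtension f (ofSeq a) - naturalExtension f (ofSeq b)
        = ofSeq (fun n => f (a n) - f (b n)) := rfl
    rw [heq, infinitesimal_ofSeq_iff, Metric.tendsto_nhds] at hmc
    rcases (hmc eps heps).exists with ⟨n, hn⟩
    have : dist (f (a n)) (f (b n)) < eps := by simpa [Real.dist_eq] using hn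
    exact absurd this (not_lt.2 (hf n))
end
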